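/- Third Law of Negation: Let A be an abstract state space, let S be an S-relation on A, and let P, Q be S-predicates on A. The implication ({P}S{¬Q} → ¬{P}S{Q}) holds if and only if there exists a state x with P(x), where {·}S{·} denotes the total correctness formula and (¬Q)(z) means ¬Q(z). -/
import Mathlib

def Tcf {A : Type*} (P : A → Prop) (S : A → A → Prop) (Q : A → Prop) : Prop :=
  ∀ x, P x → ((∃ y, S x y) ∧ ∀ z, S x z → Q z)

theorem third_law_of_negation {A : Type*} (S : A → A → Prop) (P Q : A → Prop) :
    (Tcf P S (fun z => ¬ Q z) → ¬ Tcf P S Q) ↔ ∃ x, P x := by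
  constructor
  · intro h
    by_contra hno
    push_neg at hno
    exact h (fun x hx => absurd hx (hno x)) (fun x hx => absurd hx (hno x))
  · rintro ⟨x, hx⟩ hneg hpos
    obtain ⟨⟨y, hy⟩, hq⟩ := hpos x hx
    exact (hneg x hx).2 y hy (hq y hy)
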